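/- arXiv:1807.03025 — 2 statements merged into one kernel-verified Lean document; each statement's English description precedes it below -/
import Mathlib

section
/- Let T > 0 and α ≥ 0 be constants, let h : [0,T] → [0,∞) be continuous, let w : [0,T] → [0,∞) be integrable, and let v : [0,T] × [0,T] → [0,∞) be integrable. If h(t) ≤ α + ∫₀ᵗ w(τ) h(τ) dτ + ∫₀ᵗ ∫₀^τ v(s,τ) h(s) ds dτ for every t ∈ [0,T], then h(t) ≤ α · exp( ∫₀ᵗ ( w(τ) + ∫₀^τ v(s,τ) ds ) dτ ) for every t ∈ [0,T]. -/
/-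
Let `φ t = α + ∫₀ᵗ w h + ∫₀ᵗ ∫₀^τ v(s, τ) h(s) ds dτ` be the right-hand side of the hypothesis. All
integrands are nonnegative, so `φ` is nondecreasing and `h(s) ≤ φ(s) ≤ φ(τ)` for `s ≤ τ`; hence
`φ t ≤ α + ∫₀ᵗ K φ` with `K τ = w τ + ∫₀^τ v(s, τ) ds`, and `h ≤ φ ≤ α exp (∫₀ᵗ K)` by Gronwall's
inequality for an integrable kernel. The latter holds because `(α + ∫₀ᵗ K H) exp (-∫₀ᵗ K)` is
absolutely continuous with derivative `K (H - (α + ∫₀ᵗ K H)) exp (-∫₀ᵗ K) ≤ 0` almost everywhere.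
-/

open MeasureTheory Set

theorem LipschitzOnWith.comp_absolutelyContinuousOnInterval {X Y : Type*} [PseudoMetricSpace X]
    [PseudoMetricSpace Y] {g : X → Y} {K : NNReal} {s : Set X} {f : ℝ → X} {a b : ℝ}
    (hg : LipschitzOnWith K g s) (hf : AbsolutelyContinuousOnInterval f a b)
    (hfs : MapsTo f (uIcc a b) s) : AbsolutelyContinuousOnInterval (g ∘ f) a b := by
  rw [absolutelyContinuousOnInterval_iff] at hf ⊢
  intro ε hε
  obtain ⟨δ, hδ, hfδ⟩ := hf (ε / (K + 1)) (by positivity)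
  refine ⟨δ, hδ, fun E hE hEδ ↦ ?_⟩
  calc ∑ i ∈ Finset.range E.1, dist (g (f (E.2 i).1)) (g (f (E.2 i).2))
      ≤ ∑ i ∈ Finset.range E.1, K * dist (f (E.2 i).1) (f (E.2 i).2) :=
        Finset.sum_le_sum fun i hi ↦
          hg.dist_le_mul _ (hfs (hE.1 i hi).1) _ (hfs (hE.1 i hi).2)
    _ = K * ∑ i ∈ Finset.range E.1, dist (f (E.2 i).1) (f (E.2 i).2) := by
        rw [Finset.mul_sum]
    _ ≤ K * (ε / (K + 1)) := by gcongr; exact (hfδ E hE hEδ).le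
    _ < ε := by
        rw [mul_div_assoc', div_lt_iff₀ (by positivity)]
        nlinarith

theorem ContDiff.comp_absolutelyContinuousOnInterval {E : Type*} [NormedAddCommGroup E]
    [NormedSpace ℝ E] {g : ℝ → E} {f : ℝ → ℝ} {a b : ℝ}
    (hg : ContDiff ℝ 1 g) (hf : AbsolutelyContinuousOnInterval f a b) :
    AbsolutelyContinuousOnInterval (g ∘ f) a b := by
  obtain ⟨M, hM⟩ := isCompact_uIcc.exists_bound_of_continuousOn hf.continuousOn
  obtain ⟨K, hK⟩ := hg.contDiffOn.exists_lipschitzOnWith one_ne_zero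
    (convex_closedBall (0 : ℝ) M) (isCompact_closedBall 0 M)
  exact hK.comp_absolutelyContinuousOnInterval hf fun x hx ↦ mem_closedBall_zero_iff.2 (hM x hx)

theorem AbsolutelyContinuousOnInterval.le_of_ae_deriv_nonpos {f : ℝ → ℝ} {a b : ℝ}
    (hf : AbsolutelyContinuousOnInterval f a b) (hab : a ≤ b)
    (hf' : ∀ᵐ x, x ∈ Icc a b → deriv f x ≤ 0) : f b ≤ f a := by
  have h := intervalIntegral.integral_mono_ae_restrict hab hf.intervalIntegrable_deriv
    (intervalIntegrable_const (c := (0 : ℝ))) ((ae_restrict_iff' measurableSet_Icc).2 hf')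
  rw [hf.integral_deriv_eq_sub, intervalIntegral.integral_zero] at h
  linarith

theorem le_mul_exp_integral_of_le_add_integral_mul {K H : ℝ → ℝ} {α a b : ℝ}
    (hK : IntegrableOn K (Icc a b)) (hKH : IntegrableOn (fun x ↦ K x * H x) (Icc a b))
    (hK_nonneg : ∀ x ∈ Icc a b, 0 ≤ K x)
    (hH : ∀ t ∈ Icc a b, H t ≤ α + ∫ x in a..t, K x * H x) :
    ∀ t ∈ Icc a b, H t ≤ α * Real.exp (∫ x in a..t, K x) := by
  intro t ht
  have hsub : uIcc a t ⊆ Icc a b := by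
    rw [uIcc_of_le ht.1]; exact Icc_subset_Icc_right ht.2
  have hKt : IntervalIntegrable K volume a t := (hK.mono_set hsub).intervalIntegrable
  have hKHt : IntervalIntegrable (fun x ↦ K x * H x) volume a t :=
    (hKH.mono_set hsub).intervalIntegrable
  set F := fun x ↦ α + ∫ y in a..x, K y * H y
  set G := fun x ↦ ∫ y in a..x, K y
  set φ := fun x ↦ F x * Real.exp (-G x)
  have hF : AbsolutelyContinuousOnInterval F a t :=
    (contDiff_const.add contDiff_id).comp_absolutelyContinuousOnInterval
      (hKHt.absolutelyContinuousOnInterval_intervalIntegral left_mem_uIcc)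
  have hE : AbsolutelyContinuousOnInterval (fun x ↦ Real.exp (-G x)) a t :=
    (Real.contDiff_exp.comp contDiff_neg).comp_absolutelyContinuousOnInterval
      (hKt.absolutelyContinuousOnInterval_intervalIntegral left_mem_uIcc)
  have hφ_deriv : ∀ᵐ x, x ∈ Icc a t → deriv φ x ≤ 0 := by
    filter_upwards [hKHt.ae_hasDerivAt_integral, hKt.ae_hasDerivAt_integral] with x hFx hGx hx
    have hx' : x ∈ uIcc a t := by rwa [uIcc_of_le ht.1]
    have hφx : HasDerivAt φ (K x * (H x - F x) * Real.exp (-G x)) x := by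
      refine (((hFx hx' a left_mem_uIcc).const_add α).mul
        (hGx hx' a left_mem_uIcc).neg.exp).congr_deriv ?_
      simp only [F, G, Pi.neg_apply]
      ring
    rw [hφx.deriv]
    exact mul_nonpos_of_nonpos_of_nonneg (mul_nonpos_of_nonneg_of_nonpos
      (hK_nonneg x (hsub hx')) (sub_nonpos.2 (hH x (hsub hx')))) (Real.exp_nonneg _)
  have hφt : φ t ≤ α := by
    simpa [φ, F, G] using (hF.mul hE).le_of_ae_deriv_nonpos ht.1 hφ_deriv
  calc H t ≤ F t := hH t ht
    _ = φ t * Real.exp (G t) := by simp [φ, mul_assoc, ← Real.exp_add]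
    _ ≤ α * Real.exp (G t) := by gcongr

theorem integrableOn_intervalIntegral_of_integrableOn_prod {E : Type*} [NormedAddCommGroup E]
    [NormedSpace ℝ E] {f : ℝ × ℝ → E} {a b : ℝ} (hf : IntegrableOn f (Icc a b ×ˢ Icc a b)) :
    IntegrableOn (fun τ ↦ ∫ s in a..τ, f (s, τ)) (Icc a b) := by
  have hf' : Integrable ({p : ℝ × ℝ | p.1 ≤ p.2}.indicator f)
      ((volume.restrict (Icc a b)).prod (volume.restrict (Icc a b))) := by
    rw [Measure.prod_restrict, ← Measure.volume_eq_prod]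
    exact hf.indicator (measurableSet_le measurable_fst measurable_snd)
  refine hf'.integral_prod_right.congr ?_
  filter_upwards [ae_restrict_mem measurableSet_Icc] with τ hτ
  have hsection : (fun s ↦ {p : ℝ × ℝ | p.1 ≤ p.2}.indicator f (s, τ))
      = (Iic τ).indicator (fun s ↦ f (s, τ)) := by
    ext s; simp [indicator]
  have hinter : Icc a b ∩ Iic τ = Icc a τ := by
    rw [← Ici_inter_Iic, inter_assoc, Iic_inter_Iic, inf_eq_right.2 hτ.2, Ici_inter_Iic]
  rw [hsection, setIntegral_indicator measurableSet_Iic, hinter,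
    integral_Icc_eq_integral_Ioc, intervalIntegral.integral_of_le hτ.1]

theorem monotoneOn_intervalIntegral_of_nonneg {f : ℝ → ℝ} {a b : ℝ}
    (hf : IntegrableOn f (Icc a b)) (hf_nonneg : ∀ x ∈ Icc a b, 0 ≤ f x) :
    MonotoneOn (fun x ↦ ∫ y in a..x, f y) (Icc a b) := fun s hs u hu hsu ↦
  intervalIntegral.integral_mono_interval le_rfl hs.1 hsu
    ((ae_restrict_iff' measurableSet_Ioc).2 (ae_of_all _ fun x hx ↦
      hf_nonneg x ⟨hx.1.le, hx.2.trans hu.2⟩))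
    ((intervalIntegrable_iff_integrableOn_Icc_of_le hu.1).2
      (hf.mono_set (Icc_subset_Icc_right hu.2)))

theorem intervalIntegral.integral_mul_le_integral_mul_const {v h : ℝ → ℝ} {a b c : ℝ}
    (hab : a ≤ b) (hv : IntegrableOn v (Icc a b))
    (hvh : IntegrableOn (fun x ↦ v x * h x) (Icc a b))
    (hv_nonneg : ∀ x ∈ Icc a b, 0 ≤ v x) (hh : ∀ x ∈ Icc a b, h x ≤ c) :
    ∫ x in a..b, v x * h x ≤ (∫ x in a..b, v x) * c := by
  rw [← intervalIntegral.integral_mul_const]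
  rw [← intervalIntegrable_iff_integrableOn_Icc_of_le hab] at hv hvh
  exact intervalIntegral.integral_mono_on hab hvh (hv.mul_const c)
    fun x hx ↦ mul_le_mul_of_nonneg_left (hh x hx) (hv_nonneg x hx)

noncomputable def doubleIntegralRHS (α : ℝ) (w h : ℝ → ℝ) (v : ℝ → ℝ → ℝ) (t : ℝ) : ℝ :=
  α + (∫ τ in (0:ℝ)..t, w τ * h τ) + ∫ τ in (0:ℝ)..t, ∫ s in (0:ℝ)..τ, v s τ * h s

section doubleIntegralRHS

variable {T α : ℝ} {w h : ℝ → ℝ} {v : ℝ → ℝ → ℝ}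

theorem integrableOn_intervalIntegral_mul_of_integrableOn_prod (hh_cont : ContinuousOn h (Icc 0 T))
    (hv_int : IntegrableOn (fun p : ℝ × ℝ ↦ v p.1 p.2) (Icc 0 T ×ˢ Icc 0 T)) :
    IntegrableOn (fun τ ↦ ∫ s in (0:ℝ)..τ, v s τ * h s) (Icc 0 T) :=
  integrableOn_intervalIntegral_of_integrableOn_prod (f := fun p ↦ v p.1 p.2 * h p.1) <|
    hv_int.mul_continuousOn (hh_cont.comp continuousOn_fst fun _ hp ↦ hp.1)
      (isCompact_Icc.prod isCompact_Icc)

theorem continuousOn_doubleIntegralRHS (hT : 0 ≤ T) (hh_cont : ContinuousOn h (Icc 0 T))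
    (hw_int : IntegrableOn w (Icc 0 T))
    (hv_int : IntegrableOn (fun p : ℝ × ℝ ↦ v p.1 p.2) (Icc 0 T ×ˢ Icc 0 T)) :
    ContinuousOn (doubleIntegralRHS α w h v) (Icc 0 T) := by
  have hwh_int := hw_int.mul_continuousOn hh_cont isCompact_Icc
  have hA_int := integrableOn_intervalIntegral_mul_of_integrableOn_prod hh_cont hv_int
  rw [← uIcc_of_le hT] at hwh_int hA_int ⊢
  exact (continuousOn_const.add (intervalIntegral.continuousOn_primitive_interval hwh_int)).add
    (intervalIntegral.continuousOn_primitive_interval hA_int)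

theorem monotoneOn_doubleIntegralRHS (hh_cont : ContinuousOn h (Icc 0 T))
    (hh_nonneg : ∀ t ∈ Icc 0 T, 0 ≤ h t) (hw_nonneg : ∀ t ∈ Icc 0 T, 0 ≤ w t)
    (hv_nonneg : ∀ s ∈ Icc 0 T, ∀ τ ∈ Icc 0 T, 0 ≤ v s τ) (hw_int : IntegrableOn w (Icc 0 T))
    (hv_int : IntegrableOn (fun p : ℝ × ℝ ↦ v p.1 p.2) (Icc 0 T ×ˢ Icc 0 T)) :
    MonotoneOn (doubleIntegralRHS α w h v) (Icc 0 T) := by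
  refine (monotoneOn_const.add (monotoneOn_intervalIntegral_of_nonneg
    (hw_int.mul_continuousOn hh_cont isCompact_Icc) fun τ hτ ↦
      mul_nonneg (hw_nonneg τ hτ) (hh_nonneg τ hτ))).add
    (monotoneOn_intervalIntegral_of_nonneg
      (integrableOn_intervalIntegral_mul_of_integrableOn_prod hh_cont hv_int)
      fun τ hτ ↦ intervalIntegral.integral_nonneg hτ.1 fun s hs ↦ ?_)
  have hs' : s ∈ Icc 0 T := ⟨hs.1, hs.2.trans hτ.2⟩
  exact mul_nonneg (hv_nonneg s hs' τ hτ) (hh_nonneg s hs')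

theorem doubleIntegralRHS_le_add_integral_mul (hh_cont : ContinuousOn h (Icc 0 T))
    (hh_nonneg : ∀ t ∈ Icc 0 T, 0 ≤ h t) (hw_nonneg : ∀ t ∈ Icc 0 T, 0 ≤ w t)
    (hv_nonneg : ∀ s ∈ Icc 0 T, ∀ τ ∈ Icc 0 T, 0 ≤ v s τ) (hw_int : IntegrableOn w (Icc 0 T))
    (hv_int : IntegrableOn (fun p : ℝ × ℝ ↦ v p.1 p.2) (Icc 0 T ×ˢ Icc 0 T))
    (hineq : ∀ t ∈ Icc 0 T, h t ≤ doubleIntegralRHS α w h v t) :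
    ∀ t ∈ Icc 0 T, doubleIntegralRHS α w h v t ≤
      α + ∫ τ in (0:ℝ)..t, (w τ + ∫ s in (0:ℝ)..τ, v s τ) * doubleIntegralRHS α w h v τ := by
  intro t ht
  set φ := doubleIntegralRHS α w h v
  have hsub : Icc 0 t ⊆ Icc 0 T := Icc_subset_Icc_right ht.2
  have hφ_mono := monotoneOn_doubleIntegralRHS (α := α) hh_cont hh_nonneg hw_nonneg hv_nonneg
    hw_int hv_int
  have hsec : ∀ᵐ τ ∂(volume.restrict (Icc 0 T)), IntegrableOn (fun s ↦ v s τ) (Icc 0 T) := by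
    rw [IntegrableOn, Measure.volume_eq_prod, ← Measure.prod_restrict] at hv_int
    exact hv_int.prod_left_ae
  have hmajor : ∀ᵐ τ ∂(volume.restrict (Icc 0 t)), w τ * h τ + ∫ s in (0:ℝ)..τ, v s τ * h s
      ≤ (w τ + ∫ s in (0:ℝ)..τ, v s τ) * φ τ := by
    filter_upwards [ae_restrict_of_ae_restrict_of_subset hsub hsec,
      ae_restrict_mem measurableSet_Icc] with τ hτ_int hτ
    have hsubτ : Icc 0 τ ⊆ Icc 0 T := Icc_subset_Icc_right (hτ.2.trans ht.2)
    have hvh_le : ∫ s in (0:ℝ)..τ, v s τ * h s ≤ (∫ s in (0:ℝ)..τ, v s τ) * φ τ :=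
      intervalIntegral.integral_mul_le_integral_mul_const hτ.1 (hτ_int.mono_set hsubτ)
        ((hτ_int.mul_continuousOn hh_cont isCompact_Icc).mono_set hsubτ)
        (fun s hs ↦ hv_nonneg s (hsubτ hs) τ (hsub hτ))
        fun s hs ↦ (hineq s (hsubτ hs)).trans (hφ_mono (hsubτ hs) (hsub hτ) hs.2)
    have hwh_le : w τ * h τ ≤ w τ * φ τ :=
      mul_le_mul_of_nonneg_left (hineq τ (hsub hτ)) (hw_nonneg τ (hsub hτ))
    linarith
  have hint : ∀ {f : ℝ → ℝ}, IntegrableOn f (Icc 0 T) → IntervalIntegrable f volume 0 t :=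
    fun hf ↦ (intervalIntegrable_iff_integrableOn_Icc_of_le ht.1).2 (hf.mono_set hsub)
  have hwh_int := hint (hw_int.mul_continuousOn hh_cont isCompact_Icc)
  have hA_int := hint (integrableOn_intervalIntegral_mul_of_integrableOn_prod hh_cont hv_int)
  have hK_int := hw_int.add (integrableOn_intervalIntegral_of_integrableOn_prod hv_int)
  have hKφ_int : IntervalIntegrable (fun τ ↦ (w τ + ∫ s in (0:ℝ)..τ, v s τ) * φ τ) volume 0 t :=
    hint <| hK_int.mul_continuousOn
      (continuousOn_doubleIntegralRHS (ht.1.trans ht.2) hh_cont hw_int hv_int) isCompact_Icc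
  have h_int :=
    intervalIntegral.integral_mono_ae_restrict ht.1 (hwh_int.add hA_int) hKφ_int hmajor
  rw [intervalIntegral.integral_add hwh_int hA_int] at h_int
  simp only [φ, doubleIntegralRHS] at h_int ⊢
  linarith

end doubleIntegralRHS

theorem gronwall_with_double_integral_general
    (T : ℝ) (α : ℝ)
    (h w : ℝ → ℝ) (v : ℝ → ℝ → ℝ)
    (hh_cont : ContinuousOn h (Set.Icc 0 T))
    (hh_nonneg : ∀ t ∈ Set.Icc (0:ℝ) T, 0 ≤ h t)
    (hw_nonneg : ∀ t ∈ Set.Icc (0:ℝ) T, 0 ≤ w t)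
    (hv_nonneg : ∀ s ∈ Set.Icc (0:ℝ) T, ∀ τ ∈ Set.Icc (0:ℝ) T, 0 ≤ v s τ)
    (hw_int : IntegrableOn w (Set.Icc 0 T))
    (hv_int : IntegrableOn (fun p : ℝ × ℝ => v p.1 p.2) (Set.Icc 0 T ×ˢ Set.Icc 0 T))
    (hineq : ∀ t ∈ Set.Icc (0:ℝ) T,
      h t ≤ α + (∫ τ in (0:ℝ)..t, w τ * h τ)
        + ∫ τ in (0:ℝ)..t, (∫ s in (0:ℝ)..τ, v s τ * h s)) :
    ∀ t ∈ Set.Icc (0:ℝ) T,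
      h t ≤ α * Real.exp (∫ τ in (0:ℝ)..t, (w τ + ∫ s in (0:ℝ)..τ, v s τ)) := by
  intro t ht
  have hK_int : IntegrableOn (fun τ ↦ w τ + ∫ s in (0:ℝ)..τ, v s τ) (Icc 0 T) :=
    hw_int.add (integrableOn_intervalIntegral_of_integrableOn_prod hv_int)
  have hK_nonneg : ∀ τ ∈ Icc 0 T, 0 ≤ w τ + ∫ s in (0:ℝ)..τ, v s τ := fun τ hτ ↦
    add_nonneg (hw_nonneg τ hτ) <| intervalIntegral.integral_nonneg hτ.1 fun s hs ↦
      hv_nonneg s ⟨hs.1, hs.2.trans hτ.2⟩ τ hτ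
  have hKφ_int := hK_int.mul_continuousOn
    (continuousOn_doubleIntegralRHS (α := α) (ht.1.trans ht.2) hh_cont hw_int hv_int) isCompact_Icc
  exact (hineq t ht).trans <| le_mul_exp_integral_of_le_add_integral_mul hK_int hKφ_int hK_nonneg
    (doubleIntegralRHS_le_add_integral_mul hh_cont hh_nonneg hw_nonneg hv_nonneg hw_int hv_int
      hineq) t ht

/-- Gronwall-type inequality with an additional iterated double-integral term. -/
theorem gronwall_with_double_integral
    (T : ℝ) (hT : 0 < T) (α : ℝ) (hα : 0 ≤ α)
    (h w : ℝ → ℝ) (v : ℝ → ℝ → ℝ)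
    (hh_cont : ContinuousOn h (Set.Icc 0 T))
    (hh_nonneg : ∀ t ∈ Set.Icc (0:ℝ) T, 0 ≤ h t)
    (hw_nonneg : ∀ t ∈ Set.Icc (0:ℝ) T, 0 ≤ w t)
    (hv_nonneg : ∀ s ∈ Set.Icc (0:ℝ) T, ∀ τ ∈ Set.Icc (0:ℝ) T, 0 ≤ v s τ)
    (hw_int : IntegrableOn w (Set.Icc 0 T))
    (hv_int : IntegrableOn (fun p : ℝ × ℝ => v p.1 p.2) (Set.Icc 0 T ×ˢ Set.Icc 0 T))
    (hineq : ∀ t ∈ Set.Icc (0:ℝ) T,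
      h t ≤ α + (∫ τ in (0:ℝ)..t, w τ * h τ)
        + ∫ τ in (0:ℝ)..t, (∫ s in (0:ℝ)..τ, v s τ * h s)) :
    ∀ t ∈ Set.Icc (0:ℝ) T,
      h t ≤ α * Real.exp (∫ τ in (0:ℝ)..t, (w τ + ∫ s in (0:ℝ)..τ, v s τ)) :=
  gronwall_with_double_integral_general T α h w v hh_cont hh_nonneg hw_nonneg hv_nonneg hw_int
    hv_int hineq
end

section
/- Let T > 0 and α ≥ 0 be constants, let h : [0,T] → [0,∞) be continuous, let w : [0,T] → [0,∞) be integrable, and let v : [0,T] × [0,T] → [0,∞) be integrable, and suppose h(t) ≤ α + ∫₀ᵗ w(τ) h(τ) dτ + ∫₀ᵗ ∫₀^τ v(s,τ) h(s) ds dτ for every t ∈ [0,T]. Define h̃(t) := sup_{0 ≤ s ≤ t} h(s). Then h̃(t) ≤ α + ∫₀ᵗ ( w(τ) + ∫₀^τ v(s,τ) ds ) h̃(τ) dτ for every t ∈ [0,T]. -/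
/-!
For `s ≤ t`, bound `h s` by the hypothesis at `s`, replacing `h τ` and `h σ` (`σ ≤ τ`) by the
running supremum `h̃ τ`; this turns the double integral into `∫₀ˢ (∫₀^τ v) h̃`. The new integrand
is nonnegative, so the bound at `s` is at most the bound at `t`, and taking the supremum over
`s ∈ [0, t]` gives the claim. Integrability of the new integrand comes from Fubini (for
`τ ↦ ∫₀^τ v(s, τ) ds`) and from `h̃` being monotone, hence bounded and measurable, on `[0, T]`.
-/

open MeasureTheory Set

section RunningSup

variable {h : ℝ → ℝ} {a b : ℝ}

theorem ContinuousOn.monotoneOn_sSup_image_Icc (hh : ContinuousOn h (Icc a b)) :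
    MonotoneOn (fun τ => sSup (h '' Icc a τ)) (Icc a b) := fun _ hx _ hy hxy =>
  csSup_le_csSup (isCompact_Icc.bddAbove_image (hh.mono (Icc_subset_Icc_right hy.2)))
    ⟨h a, mem_image_of_mem h ⟨le_rfl, hx.1⟩⟩ (image_mono (Icc_subset_Icc_right hxy))

theorem ContinuousOn.integrableOn_mul_sSup_image_Icc {g : ℝ → ℝ} (hh : ContinuousOn h (Icc a b))
    (hg : IntegrableOn g (Icc a b)) :
    IntegrableOn (fun τ => g τ * sSup (h '' Icc a τ)) (Icc a b) :=
  hg.mul_of_top_left (hh.monotoneOn_sSup_image_Icc.memLp_isCompact isCompact_Icc)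

theorem ContinuousOn.sSup_image_Icc_nonneg (hh : ContinuousOn h (Icc a b))
    (hh₀ : ∀ x ∈ Icc a b, 0 ≤ h x) {τ : ℝ} (hτ : τ ∈ Icc a b) : 0 ≤ sSup (h '' Icc a τ) :=
  (hh₀ a ⟨le_rfl, hτ.1.trans hτ.2⟩).trans
    ((hh.mono (Icc_subset_Icc_right hτ.2)).le_sSup_image_Icc ⟨le_rfl, hτ.1⟩)

end RunningSup

section Triangle

variable {v : ℝ → ℝ → ℝ} {a b : ℝ}

theorem integrable_restrict_prod_restrict_of_integrableOn_prod
    (hv : IntegrableOn (fun p : ℝ × ℝ => v p.1 p.2) (Icc a b ×ˢ Icc a b)) :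
    Integrable (fun p : ℝ × ℝ => v p.1 p.2)
      ((volume.restrict (Icc a b)).prod (volume.restrict (Icc a b))) := by
  rwa [Measure.prod_restrict, ← Measure.volume_eq_prod]

theorem ae_integrableOn_slice_of_integrableOn_prod
    (hv : IntegrableOn (fun p : ℝ × ℝ => v p.1 p.2) (Icc a b ×ˢ Icc a b)) :
    ∀ᵐ τ ∂volume.restrict (Icc a b), IntegrableOn (fun s => v s τ) (Icc a b) :=
  (integrable_restrict_prod_restrict_of_integrableOn_prod hv).prod_left_ae

/-- Fubini applied to `v` cut off to the triangle `s ≤ τ`. -/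
theorem integrableOn_intervalIntegral_of_integrableOn_prod_s1
    (hv : IntegrableOn (fun p : ℝ × ℝ => v p.1 p.2) (Icc a b ×ˢ Icc a b)) :
    IntegrableOn (fun τ => ∫ s in a..τ, v s τ) (Icc a b) := by
  let K : ℝ × ℝ → ℝ := {p | p.1 ≤ p.2}.indicator fun p => v p.1 p.2
  have hK : Integrable K ((volume.restrict (Icc a b)).prod (volume.restrict (Icc a b))) :=
    (integrable_restrict_prod_restrict_of_integrableOn_prod hv).indicator
      (measurableSet_le measurable_fst measurable_snd)
  refine IntegrableOn.congr_fun (f := fun τ => ∫ s in Icc a b, K (s, τ)) hK.integral_prod_right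
    (fun τ hτ => ?_) measurableSet_Icc
  have hslice : (fun s => K (s, τ)) = (Iic τ).indicator fun s => v s τ := by
    ext s
    simp only [K, indicator_apply, mem_ofPred_eq, mem_Iic]
  have hIcc : Icc a b ∩ Iic τ = Icc a τ := by
    ext x
    simp only [mem_inter_iff, mem_Icc, mem_Iic]
    exact ⟨fun hx => ⟨hx.1.1, hx.2⟩, fun hx => ⟨⟨hx.1, hx.2.trans hτ.2⟩, hx.2⟩⟩
  simp only [hslice, setIntegral_indicator measurableSet_Iic, hIcc,
    integral_Icc_eq_integral_Ioc, intervalIntegral.integral_of_le hτ.1]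

end Triangle

theorem IntegrableOn.intervalIntegrable_of_mem_Icc {f : ℝ → ℝ} {a b s : ℝ}
    (hf : IntegrableOn f (Icc a b)) (hs : s ∈ Icc a b) : IntervalIntegrable f volume a s :=
  (intervalIntegrable_iff_integrableOn_Ioc_of_le hs.1).2
    (hf.mono_set (Ioc_subset_Icc_self.trans (Icc_subset_Icc_right hs.2)))

theorem intervalIntegral.integral_mono_of_nonneg {f g : ℝ → ℝ} {a b : ℝ} (hab : a ≤ b)
    (hg : IntegrableOn g (Ioc a b)) (hf : ∀ x ∈ Ioc a b, 0 ≤ f x)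
    (hfg : ∀ᵐ x ∂volume.restrict (Ioc a b), f x ≤ g x) :
    ∫ x in a..b, f x ≤ ∫ x in a..b, g x := by
  rw [integral_of_le hab, integral_of_le hab]
  exact MeasureTheory.integral_mono_of_nonneg
    (ae_restrict_of_forall_mem measurableSet_Ioc hf) hg hfg

theorem intervalIntegral.integral_mul_le_integral_mul_of_le {f g : ℝ → ℝ} {a b C : ℝ}
    (hab : a ≤ b) (hf : IntegrableOn f (Ioc a b)) (hf₀ : ∀ x ∈ Ioc a b, 0 ≤ f x)
    (hg₀ : ∀ x ∈ Ioc a b, 0 ≤ g x) (hgC : ∀ x ∈ Ioc a b, g x ≤ C) :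
    ∫ x in a..b, f x * g x ≤ (∫ x in a..b, f x) * C := by
  rw [← intervalIntegral.integral_mul_const]
  refine integral_mono_of_nonneg hab (hf.mul_const C)
    (fun x hx => mul_nonneg (hf₀ x hx) (hg₀ x hx))
    (ae_restrict_of_forall_mem measurableSet_Ioc fun x hx =>
      mul_le_mul_of_nonneg_left (hgC x hx) (hf₀ x hx))

section RunningSupBounds

variable {h : ℝ → ℝ} {a b s : ℝ}

theorem intervalIntegral.integral_mul_le_integral_mul_sSup_image_Icc {g : ℝ → ℝ}
    (hs : s ∈ Icc a b) (hh : ContinuousOn h (Icc a b)) (hh₀ : ∀ x ∈ Icc a b, 0 ≤ h x)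
    (hg₀ : ∀ x ∈ Icc a b, 0 ≤ g x) (hg : IntegrableOn g (Icc a b)) :
    ∫ τ in a..s, g τ * h τ ≤ ∫ τ in a..s, g τ * sSup (h '' Icc a τ) := by
  have hsub : Ioc a s ⊆ Icc a b := Ioc_subset_Icc_self.trans (Icc_subset_Icc_right hs.2)
  refine integral_mono_of_nonneg hs.1 ((hh.integrableOn_mul_sSup_image_Icc hg).mono_set hsub)
    (fun τ hτ => mul_nonneg (hg₀ τ (hsub hτ)) (hh₀ τ (hsub hτ)))
    (ae_restrict_of_forall_mem measurableSet_Ioc fun τ hτ =>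
      mul_le_mul_of_nonneg_left ?_ (hg₀ τ (hsub hτ)))
  exact (hh.mono (Icc_subset_Icc_right (hsub hτ).2)).le_sSup_image_Icc ⟨hτ.1.le, le_rfl⟩

theorem intervalIntegral.integral_integral_mul_le_integral_mul_sSup_image_Icc
    {v : ℝ → ℝ → ℝ} (hs : s ∈ Icc a b) (hh : ContinuousOn h (Icc a b))
    (hh₀ : ∀ x ∈ Icc a b, 0 ≤ h x) (hv₀ : ∀ σ ∈ Icc a b, ∀ τ ∈ Icc a b, 0 ≤ v σ τ)
    (hv : IntegrableOn (fun p : ℝ × ℝ => v p.1 p.2) (Icc a b ×ˢ Icc a b)) :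
    ∫ τ in a..s, ∫ σ in a..τ, v σ τ * h σ
      ≤ ∫ τ in a..s, (∫ σ in a..τ, v σ τ) * sSup (h '' Icc a τ) := by
  have hsub : Ioc a s ⊆ Icc a b := Ioc_subset_Icc_self.trans (Icc_subset_Icc_right hs.2)
  refine integral_mono_of_nonneg hs.1 ((hh.integrableOn_mul_sSup_image_Icc
      (integrableOn_intervalIntegral_of_integrableOn_prod_s1 hv)).mono_set hsub)
    (fun τ hτ => integral_nonneg hτ.1.le fun σ hσ => ?_) ?_
  · have hσ : σ ∈ Icc a b := Icc_subset_Icc_right (hsub hτ).2 hσ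
    exact mul_nonneg (hv₀ σ hσ τ (hsub hτ)) (hh₀ σ hσ)
  filter_upwards [ae_restrict_of_ae_restrict_of_subset hsub
    (ae_integrableOn_slice_of_integrableOn_prod hv), ae_restrict_mem measurableSet_Ioc]
    with τ hvτ hτ
  have hsubτ : Ioc a τ ⊆ Icc a b := Ioc_subset_Icc_self.trans (Icc_subset_Icc_right (hsub hτ).2)
  exact integral_mul_le_integral_mul_of_le hτ.1.le (hvτ.mono_set hsubτ)
    (fun σ hσ => hv₀ σ (hsubτ hσ) τ (hsub hτ)) (fun σ hσ => hh₀ σ (hsubτ hσ))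
    (fun σ hσ => (hh.mono (Icc_subset_Icc_right (hsub hτ).2)).le_sSup_image_Icc
      (Ioc_subset_Icc_self hσ))

end RunningSupBounds

theorem gronwall_double_integral_sup_reduction_general
    (T : ℝ) (α : ℝ)
    (h w : ℝ → ℝ) (v : ℝ → ℝ → ℝ)
    (hh_cont : ContinuousOn h (Set.Icc 0 T))
    (hh_nonneg : ∀ t ∈ Set.Icc (0:ℝ) T, 0 ≤ h t)
    (hw_nonneg : ∀ t ∈ Set.Icc (0:ℝ) T, 0 ≤ w t)
    (hv_nonneg : ∀ s ∈ Set.Icc (0:ℝ) T, ∀ τ ∈ Set.Icc (0:ℝ) T, 0 ≤ v s τ)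
    (hw_int : IntegrableOn w (Set.Icc 0 T))
    (hv_int : IntegrableOn (fun p : ℝ × ℝ => v p.1 p.2) (Set.Icc 0 T ×ˢ Set.Icc 0 T))
    (hineq : ∀ t ∈ Set.Icc (0:ℝ) T,
      h t ≤ α + (∫ τ in (0:ℝ)..t, w τ * h τ)
        + ∫ τ in (0:ℝ)..t, (∫ s in (0:ℝ)..τ, v s τ * h s)) :
    ∀ t ∈ Set.Icc (0:ℝ) T,
      sSup (h '' Set.Icc 0 t) ≤
        α + ∫ τ in (0:ℝ)..t,
          (w τ + ∫ s in (0:ℝ)..τ, v s τ) * sSup (h '' Set.Icc 0 τ) := by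
  intro t ht
  have hφ := integrableOn_intervalIntegral_of_integrableOn_prod_s1 hv_int
  have hφ₀ : ∀ τ ∈ Icc 0 T, 0 ≤ ∫ σ in (0:ℝ)..τ, v σ τ := fun τ hτ =>
    intervalIntegral.integral_nonneg hτ.1 fun σ hσ => hv_nonneg σ ⟨hσ.1, hσ.2.trans hτ.2⟩ τ hτ
  have hbound : ∀ s ∈ Icc 0 T, h s ≤ α + ∫ τ in (0:ℝ)..s,
      (w τ + ∫ σ in (0:ℝ)..τ, v σ τ) * sSup (h '' Icc 0 τ) := by
    intro s hs
    simp_rw [add_mul]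
    rw [intervalIntegral.integral_add
      (IntegrableOn.intervalIntegrable_of_mem_Icc
        (hh_cont.integrableOn_mul_sSup_image_Icc hw_int) hs)
      (IntegrableOn.intervalIntegrable_of_mem_Icc
        (hh_cont.integrableOn_mul_sSup_image_Icc hφ) hs)]
    linarith [hineq s hs, intervalIntegral.integral_mul_le_integral_mul_sSup_image_Icc hs
      hh_cont hh_nonneg hw_nonneg hw_int,
      intervalIntegral.integral_integral_mul_le_integral_mul_sSup_image_Icc hs
      hh_cont hh_nonneg hv_nonneg hv_int]
  refine csSup_le ⟨h 0, mem_image_of_mem h ⟨le_rfl, ht.1⟩⟩ ?_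
  rintro _ ⟨s, hs, rfl⟩
  refine (hbound s ⟨hs.1, hs.2.trans ht.2⟩).trans ((add_le_add_iff_left α).2 ?_)
  have hsub : Ioc 0 t ⊆ Icc 0 T := Ioc_subset_Icc_self.trans (Icc_subset_Icc_right ht.2)
  exact intervalIntegral.integral_mono_interval le_rfl hs.1 hs.2
    (ae_restrict_of_forall_mem measurableSet_Ioc fun τ hτ =>
      mul_nonneg (add_nonneg (hw_nonneg τ (hsub hτ)) (hφ₀ τ (hsub hτ)))
        (hh_cont.sSup_image_Icc_nonneg hh_nonneg (hsub hτ)))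
    (IntegrableOn.intervalIntegrable_of_mem_Icc
      (hh_cont.integrableOn_mul_sSup_image_Icc (hw_int.add hφ)) ht)

/-- Reduction step for the Gronwall-type inequality with a double-integral term:
the running supremum `h̃(t) = sup_{0 ≤ s ≤ t} h(s)` satisfies a single-integral
Gronwall inequality. -/
theorem gronwall_double_integral_sup_reduction
    (T : ℝ) (hT : 0 < T) (α : ℝ) (hα : 0 ≤ α)
    (h w : ℝ → ℝ) (v : ℝ → ℝ → ℝ)
    (hh_cont : ContinuousOn h (Set.Icc 0 T))
    (hh_nonneg : ∀ t ∈ Set.Icc (0:ℝ) T, 0 ≤ h t)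
    (hw_nonneg : ∀ t ∈ Set.Icc (0:ℝ) T, 0 ≤ w t)
    (hv_nonneg : ∀ s ∈ Set.Icc (0:ℝ) T, ∀ τ ∈ Set.Icc (0:ℝ) T, 0 ≤ v s τ)
    (hw_int : IntegrableOn w (Set.Icc 0 T))
    (hv_int : IntegrableOn (fun p : ℝ × ℝ => v p.1 p.2) (Set.Icc 0 T ×ˢ Set.Icc 0 T))
    (hineq : ∀ t ∈ Set.Icc (0:ℝ) T,
      h t ≤ α + (∫ τ in (0:ℝ)..t, w τ * h τ)
        + ∫ τ in (0:ℝ)..t, (∫ s in (0:ℝ)..τ, v s τ * h s)) :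
    ∀ t ∈ Set.Icc (0:ℝ) T,
      sSup (h '' Set.Icc 0 t) ≤
        α + ∫ τ in (0:ℝ)..t,
          (w τ + ∫ s in (0:ℝ)..τ, v s τ) * sSup (h '' Set.Icc 0 τ) :=
  gronwall_double_integral_sup_reduction_general T α h w v hh_cont hh_nonneg hw_nonneg hv_nonneg
    hw_int hv_int hineq
end
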